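/- arXiv:dg-ga/9707022 — 3 statements merged into one kernel-verified Lean document; each statement's English description precedes it below -/
import Mathlib

section
/- With R_a = [[A,B],[C,D]] ∈ M(2m,ℂ) and W = [[1ₘ,1ₘ],[w·1ₘ,-w·1ₘ]], w = √z, one has det(R_a + W·diag(e^{cw},e^{-cw})·W⁻¹) = e^{mcw}·det_{ℂᵐ}([W⁻¹R_aW]₂₂) + O(w^{m+1}·e^{(m-1)cw}) as w → ∞ along the positive real axis, where [W⁻¹R_aW]₂₂ = -(w/2)B + (A+D)/2 - (1/(2w))C and c > 0. -/
/-!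
Conjugating by `W` turns the determinant into `det (W⁻¹ R_a W + diag(e, e⁻¹))` with
`e = exp (c w)`. Pulling `e` out of the first block row and `w` out of the second writes it as
`e ^ m * w ^ m * det (M + (w / e) • F)`, where `M` and `F` are polynomial in `1 / w` and
`w ^ m * det M = det [W⁻¹ R_a W]₂₂`. Expanding `det (M + ε • F)` multilinearly in the rows, every
term except `det M` carries a factor `ε`, so the difference is `O(ε)` with `ε = w e^{-cw}`.
-/

open Asymptotics Filter Topology

namespace Matrix
variable {n : Type*} [Fintype n] [DecidableEq n]

theorem det_add_smul_eq_sum {R : Type*} [CommRing R] (M F : Matrix n n R) (f : R) :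
    (M + f • F).det =
      ∑ S : Finset n, f ^ S.card * det (of fun i => if i ∈ S then F i else M i) := by
  rw [add_comm]
  refine (detRowAlternating.toMultilinearMap.map_add_univ (f • F) M).trans
    (Finset.sum_congr rfl fun S _ => ?_)
  set G : n → n → R := fun i => if i ∈ S then F i else M i
  have hrows : S.piecewise (f • F) M = S.piecewise (fun i => f • G i) G := by
    ext i j
    by_cases hi : i ∈ S <;> simp [G, Finset.piecewise, hi]
  rw [hrows]
  exact (detRowAlternating.toMultilinearMap.map_piecewise_smul (fun _ => f) _ S).trans
    (by rw [Finset.prod_const, smul_eq_mul]; rfl)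

theorem isBigO_det_add_smul_sub_det {𝕜 : Type*} [NormedField 𝕜] {α : Type*} {l : Filter α}
    {M F : α → Matrix n n 𝕜} {M₀ F₀ : Matrix n n 𝕜} {f : α → 𝕜}
    (hM : Tendsto M l (𝓝 M₀)) (hF : Tendsto F l (𝓝 F₀)) (hf : Tendsto f l (𝓝 0)) :
    (fun x => (M x + f x • F x).det - (M x).det) =O[l] f := by
  have hterm (S : Finset n) (hS : S.Nonempty) :
      (fun x => f x ^ S.card * det (of fun i => if i ∈ S then F x i else M x i)) =O[l] f := by
    have hpow : (fun x => f x ^ S.card) =O[l] f := by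
      obtain ⟨k, hk⟩ : ∃ k, S.card = k + 1 := Nat.exists_eq_add_one.2 hS.card_pos
      simpa [hk, pow_succ] using ((hf.pow k).isBigO_one 𝕜).mul (isBigO_refl f l)
    have hrows : Tendsto (fun x => of fun i => if i ∈ S then F x i else M x i) l
        (𝓝 (of fun i => if i ∈ S then F₀ i else M₀ i)) := by
      refine tendsto_pi_nhds.2 fun i => ?_
      change Tendsto (fun x => if i ∈ S then F x i else M x i) l
        (𝓝 (if i ∈ S then F₀ i else M₀ i))
      split_ifs
      · exact (continuous_apply i).tendsto _ |>.comp hF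
      · exact (continuous_apply i).tendsto _ |>.comp hM
    have hdet := ((continuous_id.matrix_det.tendsto _).comp hrows).isBigO_one 𝕜
    exact (hpow.mul hdet).congr_right fun x => mul_one (f x)
  refine (IsBigO.sum (s := Finset.univ.erase ∅) fun S hS =>
    hterm S (Finset.nonempty_iff_ne_empty.2 (Finset.ne_of_mem_erase hS))).congr_left fun x => ?_
  rw [Finset.sum_apply, det_add_smul_eq_sum, ← Finset.add_sum_erase _ _ (Finset.mem_univ ∅)]
  simp only [Finset.card_empty, pow_zero, one_mul, Finset.notMem_empty, if_false]
  exact (add_sub_cancel_left _ _).symm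

end Matrix

open Matrix

noncomputable section
variable {n : Type*} [DecidableEq n]

def blockW (w : ℂ) : Matrix (n ⊕ n) (n ⊕ n) ℂ := fromBlocks 1 1 (w • 1) ((-w) • 1)

def blockWInv (w : ℂ) : Matrix (n ⊕ n) (n ⊕ n) ℂ :=
  (2 : ℂ)⁻¹ • fromBlocks 1 (w⁻¹ • 1) 1 ((-w⁻¹) • 1)

section
variable (A B C D : Matrix n n ℂ)

/- With `t = 1 / w`,
`diag(e, w)⁻¹ (W⁻¹ R_a W + diag(e, e⁻¹)) = mainPart t + (w / e) • correction t`,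
the second block row of `mainPart t` being `t` times that of `W⁻¹ R_a W`. -/
def mainPart (t : ℂ) : Matrix (n ⊕ n) (n ⊕ n) ℂ :=
  fromBlocks 1 0 ((2 : ℂ)⁻¹ • (B + t • (A - D) - t ^ 2 • C))
    ((2 : ℂ)⁻¹ • (-B + t • (A + D) - t ^ 2 • C))

def correction (t : ℂ) : Matrix (n ⊕ n) (n ⊕ n) ℂ :=
  fromBlocks ((2 : ℂ)⁻¹ • (B + t • (A + D) + t ^ 2 • C))
    ((2 : ℂ)⁻¹ • (-B + t • (A - D) + t ^ 2 • C)) 0 (t ^ 2 • 1)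

theorem continuous_mainPart : Continuous (mainPart A B C D) := by
  unfold mainPart; fun_prop

theorem continuous_correction : Continuous (correction A B C D) := by
  unfold correction; fun_prop

variable [Fintype n]

theorem blockW_mul_blockWInv {w : ℂ} (hw : w ≠ 0) :
    blockW w * blockWInv w = (1 : Matrix (n ⊕ n) (n ⊕ n) ℂ) := by
  simp only [blockW, blockWInv, Matrix.mul_smul, fromBlocks_multiply, ← fromBlocks_one,
    fromBlocks_smul, fromBlocks_inj]
  refine ⟨?_, ?_, ?_, ?_⟩ <;> simp only [Matrix.mul_one, smul_smul] <;> match_scalars <;>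
    field_simp <;> ring

theorem blockWInv_mul_mul_blockW_add {w e : ℂ} (hw : w ≠ 0) (he : e ≠ 0) :
    blockWInv w * fromBlocks A B C D * blockW w + fromBlocks (e • 1) 0 0 (e⁻¹ • 1) =
      fromBlocks (e • 1) 0 0 (w • 1) *
        (mainPart A B C D w⁻¹ + (w / e) • correction A B C D w⁻¹) := by
  simp only [blockW, blockWInv, mainPart, correction, Matrix.smul_mul, fromBlocks_multiply,
    fromBlocks_smul, fromBlocks_add, fromBlocks_inj]
  refine ⟨?_, ?_, ?_, ?_⟩ <;>
    simp only [Matrix.mul_smul, Matrix.one_mul, Matrix.mul_one, Matrix.zero_mul, smul_smul,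
      smul_add, smul_sub, add_zero, zero_add, smul_zero, smul_neg, Matrix.mul_add,
      Matrix.mul_sub] <;>
    match_scalars <;> field_simp

theorem det_fromBlocks_add_blockW_conj {w e : ℂ} (hw : w ≠ 0) (he : e ≠ 0) :
    det (fromBlocks A B C D + blockW w * fromBlocks (e • 1) 0 0 (e⁻¹ • 1) * (blockW w)⁻¹) =
      e ^ Fintype.card n * w ^ Fintype.card n *
        det (mainPart A B C D w⁻¹ + (w / e) • correction A B C D w⁻¹) := by
  have hWV := blockW_mul_blockWInv (n := n) hw
  set R := fromBlocks A B C D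
  set E : Matrix (n ⊕ n) (n ⊕ n) ℂ := fromBlocks (e • 1) 0 0 (e⁻¹ • 1)
  have hconj : R + blockW w * E * blockWInv w =
      blockW w * (blockWInv w * R * blockW w + E) * blockWInv w := by
    simp only [Matrix.mul_add, Matrix.add_mul, ← Matrix.mul_assoc, hWV, Matrix.one_mul]
    simp only [Matrix.mul_assoc, hWV, Matrix.mul_one]
  rw [Matrix.inv_eq_right_inv hWV, hconj, det_conj_of_mul_eq_one hWV (mul_eq_one_comm.1 hWV),
    blockWInv_mul_mul_blockW_add A B C D hw he, det_mul, det_fromBlocks_zero₂₁, det_smul, det_smul,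
    det_one, mul_one, mul_one]

theorem det_principalBlock {w : ℂ} (hw : w ≠ 0) :
    det ((-(w / 2)) • B + ((1 : ℂ) / 2) • (A + D) - (1 / (2 * w)) • C) =
      w ^ Fintype.card n * det (mainPart A B C D w⁻¹) := by
  rw [mainPart, det_fromBlocks_zero₁₂, det_one, one_mul, ← det_smul]
  congr 1
  match_scalars <;> field_simp

end

end

theorem tendsto_ofReal_inv_atTop : Tendsto (fun w : ℝ => (w : ℂ)⁻¹) atTop (𝓝 0) := by
  simpa [Function.comp_def] using (Complex.continuous_ofReal.tendsto 0).comp tendsto_inv_atTop_zero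

theorem tendsto_ofReal_div_exp_mul_atTop {c : ℝ} (hc : 0 < c) :
    Tendsto (fun w : ℝ => (w : ℂ) / Complex.exp (c * w)) atTop (𝓝 0) := by
  have h := ((Real.tendsto_div_pow_mul_exp_add_atTop 1 0 1 one_ne_zero.symm).comp
    (tendsto_id.const_mul_atTop hc)).const_mul c⁻¹
  rw [mul_zero] at h
  have h' : Tendsto (fun w : ℝ => w / Real.exp (c * w)) atTop (𝓝 0) :=
    h.congr fun w => by
      simp only [Function.comp_apply, id_eq, pow_one, one_mul, add_zero]
      field_simp
  simpa [Function.comp_def] using (Complex.continuous_ofReal.tendsto 0).comp h'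

theorem exp_mul_pow_mul_div_exp (m : ℕ) (c w : ℝ) :
    Complex.exp (c * w) ^ m * (w : ℂ) ^ m * (w / Complex.exp (c * w)) =
      ((w ^ (m + 1) * Real.exp ((m - 1) * c * w) : ℝ) : ℂ) := by
  push_cast
  rw [← Complex.exp_nat_mul, div_eq_mul_inv, ← Complex.exp_neg,
    show ((m : ℂ) - 1) * c * w = m * (c * w) + -(c * w) by ring, Complex.exp_add]
  ring

/-- `det(R_a + W·diag(e^{cw}, e^{-cw})·W⁻¹) = e^{mcw}·det([W⁻¹R_aW]₂₂) + O(w^{m+1} e^{(m-1)cw})`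
as `w → ∞` along the positive real axis. -/
theorem stmt3 (m : ℕ) (c : ℝ) (hc : 0 < c)
    (A B C D : Matrix (Fin m) (Fin m) ℂ) :
    (fun w : ℝ =>
        Matrix.det
          (Matrix.fromBlocks A B C D +
            Matrix.fromBlocks (1 : Matrix (Fin m) (Fin m) ℂ) 1 ((w : ℂ) • 1) ((-(w : ℂ)) • 1) *
              Matrix.fromBlocks
                (Complex.exp (c * w) • (1 : Matrix (Fin m) (Fin m) ℂ)) 0 0
                (Complex.exp (-(c * w)) • (1 : Matrix (Fin m) (Fin m) ℂ)) *
              (Matrix.fromBlocks (1 : Matrix (Fin m) (Fin m) ℂ) 1 ((w : ℂ) • 1) ((-(w : ℂ)) • 1))⁻¹)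
        - Complex.exp (m * c * w) *
            Matrix.det
              ((-(w / 2 : ℂ)) • B + ((1 : ℂ) / 2) • (A + D) - (1 / (2 * (w : ℂ))) • C))
      =O[atTop] fun w : ℝ => w ^ (m + 1) * Real.exp (((m : ℝ) - 1) * c * w) := by
  have hlim {F : ℂ → Matrix (Fin m ⊕ Fin m) (Fin m ⊕ Fin m) ℂ} (hF : Continuous F) :
      Tendsto (fun w : ℝ => F (w : ℂ)⁻¹) atTop (𝓝 (F 0)) :=
    (hF.tendsto 0).comp tendsto_ofReal_inv_atTop
  have hdiff := isBigO_det_add_smul_sub_det (hlim (continuous_mainPart A B C D))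
    (hlim (continuous_correction A B C D)) (tendsto_ofReal_div_exp_mul_atTop hc)
  refine ((isBigO_refl (fun w : ℝ => Complex.exp (c * w) ^ m * (w : ℂ) ^ m) atTop).mul hdiff
    |>.congr' ?_ (Eventually.of_forall fun w => exp_mul_pow_mul_div_exp m c w)).trans
    (Complex.isBigO_ofReal_left.2 (isBigO_refl _ _))
  filter_upwards [eventually_gt_atTop 0] with w hw
  have hw' : (w : ℂ) ≠ 0 := Complex.ofReal_ne_zero.2 hw.ne'
  have hconj := det_fromBlocks_add_blockW_conj A B C D hw' (Complex.exp_ne_zero (c * w))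
  have hexp : Complex.exp (m * c * w) = Complex.exp (c * w) ^ m := by
    rw [mul_assoc, Complex.exp_nat_mul]
  rw [blockW, Fintype.card_fin] at hconj
  rw [Complex.exp_neg, hconj, hexp, det_principalBlock A B C D hw', Fintype.card_fin]
  ring
end

section
/- Let φ be the normalized fundamental matrix (φ(a) = 1_{nm}) of an n-th order linear system on [a,b] with ℂᵐ values, and let U : [a,b] → GL(m,ℂ) be smooth with U(a) = 1ₘ. If u₁,…,u_n is the basis of solutions giving φ, then the matrix φᵘ(x) := T(U)(x)·φ(x)·T(U)(a)⁻¹ is the normalized fundamental matrix of the conjugated system whose solutions are U⁻¹u₁,…,U⁻¹u_n, i.e. φᵘ(a) = 1_{nm} and the (i,j) block of T(U)·φ is (U⁻¹u_j)^{(i)} (derivatives of order i = 0,…,n-1). -/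
open Finset

section Aux

lemma aux_contDiff_prod {ι : Type*} (s : Finset ι) (f : ι → ℝ → ℂ)
    (hf : ∀ i ∈ s, ContDiff ℝ (⊤ : ℕ∞) (f i)) :
    ContDiff ℝ (⊤ : ℕ∞) (fun x => ∏ i ∈ s, f i x) := by
  classical
  induction s using Finset.induction with
  | empty => simpa using contDiff_const
  | @insert c s hni ih =>
    simp only [Finset.prod_insert hni]
    exact (hf _ (Finset.mem_insert_self _ _)).mul
      (ih fun i hi => hf i (Finset.mem_insert_of_mem hi))

lemma aux_contDiff_sum {ι : Type*} (s : Finset ι) (f : ι → ℝ → ℂ)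
    (hf : ∀ i ∈ s, ContDiff ℝ (⊤ : ℕ∞) (f i)) :
    ContDiff ℝ (⊤ : ℕ∞) (fun x => ∑ i ∈ s, f i x) := by
  classical
  induction s using Finset.induction with
  | empty => simpa using contDiff_const
  | @insert c s hni ih =>
    simp only [Finset.sum_insert hni]
    exact (hf _ (Finset.mem_insert_self _ _)).add
      (ih fun i hi => hf i (Finset.mem_insert_of_mem hi))

lemma aux_contDiff_det {k : ℕ} (A : ℝ → Matrix (Fin k) (Fin k) ℂ)
    (hA : ∀ p q, ContDiff ℝ (⊤ : ℕ∞) (fun x => A x p q)) :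
    ContDiff ℝ (⊤ : ℕ∞) (fun x => (A x).det) := by
  simp only [Matrix.det_apply, Units.smul_def, zsmul_eq_mul]
  exact aux_contDiff_sum _ _ fun σ _ =>
    contDiff_const.mul (aux_contDiff_prod _ _ fun i _ => hA (σ i) i)

lemma aux_contDiff_inv {k : ℕ} (A : ℝ → Matrix (Fin k) (Fin k) ℂ)
    (hA : ∀ p q, ContDiff ℝ (⊤ : ℕ∞) (fun x => A x p q))
    (hAu : ∀ x, IsUnit (A x).det) (p q : Fin k) :
    ContDiff ℝ (⊤ : ℕ∞) (fun x => (A x)⁻¹ p q) := by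
  have hadj : ContDiff ℝ (⊤ : ℕ∞) (fun x => (A x).adjugate p q) := by
    simp only [Matrix.adjugate_apply]
    apply aux_contDiff_det
    intro i j
    simp only [Matrix.updateRow_apply]
    by_cases h : i = q
    · simpa [h] using contDiff_const
    · simpa [h] using hA i j
  have h : (fun x => (A x)⁻¹ p q) = fun x => ((A x).det)⁻¹ * (A x).adjugate p q := by
    funext x
    rw [Matrix.inv_def, Ring.inverse_eq_inv]
    simp [Matrix.smul_apply, smul_eq_mul]
  rw [h]
  exact ((aux_contDiff_det A hA).inv fun x => (isUnit_iff_ne_zero.mp (hAu x))).mul hadj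

lemma aux_diff (f : ℝ → ℂ) (hf : ContDiff ℝ ((⊤:ℕ∞) : WithTop ℕ∞) f) (j : ℕ) :
    Differentiable ℝ (iteratedDeriv j f) :=
  (contDiff_iff_iteratedDeriv.1 hf).2 j (WithTop.coe_lt_top j)

lemma aux_iteratedDeriv_add (f g : ℝ → ℂ) (hf : ContDiff ℝ ((⊤:ℕ∞) : WithTop ℕ∞) f)
    (hg : ContDiff ℝ ((⊤:ℕ∞) : WithTop ℕ∞) g) (i : ℕ) (x : ℝ) :
    iteratedDeriv i (fun y => f y + g y) x = iteratedDeriv i f x + iteratedDeriv i g x := by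
  simp_rw [← iteratedDerivWithin_univ]
  have := iteratedDerivWithin_add (Set.mem_univ x) uniqueDiffOn_univ
    (((hf.of_le (by exact_mod_cast le_top)).contDiffOn (s := Set.univ) (n := (i:ℕ))).contDiffWithinAt (Set.mem_univ x))
    (((hg.of_le (by exact_mod_cast le_top)).contDiffOn (s := Set.univ) (n := (i:ℕ))).contDiffWithinAt (Set.mem_univ x))
  simpa [Pi.add_def] using this

lemma aux_iteratedDeriv_sum {ι : Type*} (s : Finset ι) (f : ι → ℝ → ℂ)
    (hf : ∀ r ∈ s, ContDiff ℝ ((⊤:ℕ∞) : WithTop ℕ∞) (f r)) (i : ℕ) (x : ℝ) :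
    iteratedDeriv i (fun y => ∑ r ∈ s, f r y) x = ∑ r ∈ s, iteratedDeriv i (f r) x := by
  classical
  induction s using Finset.induction with
  | empty =>
    simp only [Finset.sum_empty]
    induction i with
    | zero => simp
    | succ i ih => rw [iteratedDeriv_succ']; simp only [deriv_const']; exact ih
  | @insert c s hcs ih =>
    simp only [Finset.sum_insert hcs]
    rw [aux_iteratedDeriv_add _ _ (hf _ (mem_insert_self _ _))
      (ContDiff.sum fun r hr => hf r (mem_insert_of_mem hr)),
      ih fun r hr => hf r (mem_insert_of_mem hr)]

lemma aux_leibniz (f g : ℝ → ℂ) (hf : ContDiff ℝ ((⊤:ℕ∞) : WithTop ℕ∞) f)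
    (hg : ContDiff ℝ ((⊤:ℕ∞) : WithTop ℕ∞) g) (i : ℕ) (x : ℝ) :
    iteratedDeriv i (fun y => f y * g y) x =
      ∑ k ∈ Finset.range (i + 1),
        (i.choose k : ℂ) * (iteratedDeriv (i - k) f x * iteratedDeriv k g x) := by
  induction i generalizing x with
  | zero => simp
  | succ i ih =>
    rw [iteratedDeriv_succ]
    have hcongr : deriv (iteratedDeriv i fun y => f y * g y) x =
        deriv (fun y => ∑ k ∈ Finset.range (i + 1),
          (i.choose k : ℂ) * (iteratedDeriv (i - k) f y * iteratedDeriv k g y)) x := by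
      apply Filter.EventuallyEq.deriv_eq
      exact Filter.Eventually.of_forall fun y => ih y
    rw [hcongr, deriv_fun_sum (fun k _ => by
      exact (((aux_diff f hf (i-k)) x).mul ((aux_diff g hg k) x)).const_mul _)]
    have hterm : ∀ k ∈ Finset.range (i + 1),
        deriv (fun y => (i.choose k : ℂ) * (iteratedDeriv (i - k) f y * iteratedDeriv k g y)) x =
        (i.choose k : ℂ) * (iteratedDeriv (i + 1 - k) f x * iteratedDeriv k g x)
          + (i.choose k : ℂ) * (iteratedDeriv (i + 1 - (k+1)) f x * iteratedDeriv (k+1) g x) := by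
      intro k hk
      have hki : k ≤ i := Nat.lt_succ_iff.mp (mem_range.mp hk)
      rw [deriv_const_mul _ (((aux_diff f hf (i-k)) x).fun_mul ((aux_diff g hg k) x)),
        deriv_fun_mul ((aux_diff f hf (i-k)) x) ((aux_diff g hg k) x)]
      have h1 : deriv (iteratedDeriv (i - k) f) x = iteratedDeriv (i + 1 - k) f x := by
        rw [← iteratedDeriv_succ]
        congr 1
        omega
      have h2 : deriv (iteratedDeriv k g) x = iteratedDeriv (k + 1) g x := by
        rw [iteratedDeriv_succ]
      have h3 : i + 1 - (k + 1) = i - k := by omega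
      rw [h1, h2, h3]
      ring
    rw [Finset.sum_congr rfl hterm, Finset.sum_add_distrib]
    set t : ℕ → ℂ := fun k => iteratedDeriv (i + 1 - k) f x * iteratedDeriv k g x with ht
    have hpascal : ∀ k, ((i+1).choose (k+1) : ℂ) = (i.choose k : ℂ) + (i.choose (k+1) : ℂ) := by
      intro k; rw [Nat.choose_succ_succ]; push_cast; ring
    have key : ∑ k ∈ range (i+1), (i.choose (k+1) : ℂ) * t (k+1) + t 0
        = ∑ k ∈ range (i+1), (i.choose k : ℂ) * t k := by
      have h0 : (t 0 : ℂ) = ((i.choose 0 : ℕ) : ℂ) * t 0 := by simp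
      rw [h0, ← Finset.sum_range_succ' (fun k => (i.choose k : ℂ) * t k) (i+1),
        Finset.sum_range_succ]
      simp [Nat.choose_succ_self]
    have hR : ∑ k ∈ range (i+2), ((i+1).choose k : ℂ) * t k
        = ∑ k ∈ range (i+1), (i.choose k : ℂ) * t (k+1)
          + ∑ k ∈ range (i+1), (i.choose k : ℂ) * t k := by
      rw [Finset.sum_range_succ' (fun k => ((i+1).choose k : ℂ) * t k) (i+1)]
      simp_rw [hpascal, add_mul]
      rw [Finset.sum_add_distrib, Nat.choose_zero_right]
      push_cast
      rw [one_mul, add_assoc, key]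
    rw [hR]
    ring

end Aux

/-- The conjugated fundamental matrix `φᵘ(x) = T(U)(x)·φ(x)·T(U)(a)⁻¹` is the
normalized fundamental matrix of the conjugated system: `φᵘ(a) = 1` and the
`(i,j)` block of `T(U)·φ` consists of the derivatives `(U⁻¹ u_j)^{(i)}`. -/
theorem stmt6 (n m : ℕ) (hn : 1 ≤ n) (hm : 1 ≤ m) (a : ℝ)
    (U : ℝ → Matrix (Fin m) (Fin m) ℂ)
    (u : Fin n → ℝ → Matrix (Fin m) (Fin m) ℂ)
    (hU : ∀ p q, ContDiff ℝ (⊤ : ℕ∞) (fun x => U x p q))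
    (hUinv : ∀ x : ℝ, IsUnit (U x).det)
    (hUa : U a = 1)
    (hu : ∀ j p q, ContDiff ℝ (⊤ : ℕ∞) (fun x => u j x p q))
    (φ : ℝ → Matrix (Fin n × Fin m) (Fin n × Fin m) ℂ)
    (hφ : ∀ x, φ x = Matrix.of fun ip jq : Fin n × Fin m =>
      iteratedDeriv (ip.1 : ℕ) (fun y => u jq.1 y ip.2 jq.2) x)
    (hφa : φ a = 1)
    (T : ℝ → Matrix (Fin n × Fin m) (Fin n × Fin m) ℂ)
    (hT : ∀ x, T x = Matrix.of fun ip jq : Fin n × Fin m =>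
      if (jq.1 : ℕ) ≤ (ip.1 : ℕ) then
        ((ip.1 : ℕ).choose (jq.1 : ℕ) : ℂ) *
          iteratedDeriv ((ip.1 : ℕ) - (jq.1 : ℕ)) (fun y => (U y)⁻¹ ip.2 jq.2) x
      else 0)
    (φu : ℝ → Matrix (Fin n × Fin m) (Fin n × Fin m) ℂ)
    (hφu : ∀ x, φu x = T x * φ x * (T a)⁻¹) :
    φu a = 1 ∧
    ∀ x, ∀ ip jq : Fin n × Fin m,
      (T x * φ x : Matrix (Fin n × Fin m) (Fin n × Fin m) ℂ) ip jq =
        iteratedDeriv (ip.1 : ℕ) (fun y => ((U y)⁻¹ * u jq.1 y) ip.2 jq.2) x := by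
  classical
  have hUinv' : ∀ p q, ContDiff ℝ ((⊤:ℕ∞) : WithTop ℕ∞) (fun x => (U x)⁻¹ p q) := fun p q =>
    (aux_contDiff_inv U hU hUinv p q).of_le (by simp)
  have hu' : ∀ j p q, ContDiff ℝ ((⊤:ℕ∞) : WithTop ℕ∞) (fun x => u j x p q) := fun j p q =>
    (hu j p q).of_le (by simp)
  constructor
  · -- φu a = 1
    have hTdet : IsUnit (T a).det := by
      have hBT : Matrix.BlockTriangular (T a) (fun ip : Fin n × Fin m => -((ip.1 : ℕ) : ℤ)) := by
        intro ip jq hlt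
        rw [hT]
        simp only [Matrix.of_apply]
        rw [if_neg]
        simp only at hlt
        omega
      rw [hBT.det]
      have hone : ∀ k ∈ Finset.image (fun ip : Fin n × Fin m => -((ip.1 : ℕ) : ℤ)) univ,
          ((T a).toSquareBlock (fun ip : Fin n × Fin m => -((ip.1 : ℕ) : ℤ)) k).det = 1 := by
        intro k hk
        have hblock : (T a).toSquareBlock (fun ip : Fin n × Fin m => -((ip.1 : ℕ) : ℤ)) k = 1 := by
          ext α β
          have hαβ : ((α.1.1 : ℕ) : ℤ) = ((β.1.1 : ℕ) : ℤ) := by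
            have h₁ := α.2
            have h₂ := β.2
            omega
          have hval : (α.1.1 : ℕ) = (β.1.1 : ℕ) := by exact_mod_cast hαβ
          rw [Matrix.toSquareBlock_def]
          simp only [Matrix.of_apply]
          rw [hT]
          simp only [Matrix.of_apply]
          rw [if_pos (le_of_eq hval.symm), hval, Nat.choose_self, Nat.sub_self,
            iteratedDeriv_zero, hUa, inv_one]
          rw [Matrix.one_apply, Matrix.one_apply, Nat.cast_one, one_mul]
          by_cases h : α = β
          · subst h
            simp
          · rw [if_neg h, if_neg]
            intro h2
            exact h (Subtype.ext (Prod.ext (Fin.ext hval) h2))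
        rw [hblock, Matrix.det_one]
      rw [Finset.prod_congr rfl hone, Finset.prod_const_one]
      exact isUnit_one
    rw [hφu, hφa, mul_one, Matrix.mul_nonsing_inv _ hTdet]
  · -- Leibniz block formula
    rintro x ⟨i, p⟩ ⟨j, q⟩
    have hrhs : iteratedDeriv (i : ℕ) (fun y => ((U y)⁻¹ * u j y) p q) x
        = ∑ r : Fin m, ∑ k ∈ range ((i : ℕ) + 1), (((i : ℕ)).choose k : ℂ) *
            (iteratedDeriv ((i : ℕ) - k) (fun y => (U y)⁻¹ p r) x *
              iteratedDeriv k (fun y => u j y r q) x) := by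
      have hmul : (fun y => ((U y)⁻¹ * u j y) p q)
          = fun y => ∑ r : Fin m, (U y)⁻¹ p r * u j y r q := by
        funext y
        rw [Matrix.mul_apply]
      rw [hmul, aux_iteratedDeriv_sum univ _ (fun r _ => (hUinv' p r).mul (hu' j r q)) _ x]
      exact Finset.sum_congr rfl fun r _ => aux_leibniz _ _ (hUinv' p r) (hu' j r q) _ x
    rw [hrhs, Matrix.mul_apply, hT, hφ, Fintype.sum_prod_type]
    simp only [Matrix.of_apply]
    rw [Finset.sum_comm]
    apply Finset.sum_congr rfl
    intro r _
    -- now per column r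
    set H : ℕ → ℂ := fun k =>
      (if k ≤ (i : ℕ) then (((i : ℕ)).choose k : ℂ) *
          iteratedDeriv ((i : ℕ) - k) (fun y => (U y)⁻¹ p r) x else 0) *
        iteratedDeriv k (fun y => u j y r q) x with hH
    have hfin : ∑ k : Fin n, H (k : ℕ) = ∑ k ∈ range n, H k :=
      Fin.sum_univ_eq_sum_range H n
    have hsub : ∑ k ∈ range n, H k = ∑ k ∈ range ((i : ℕ) + 1), H k := by
      refine (Finset.sum_subset ?_ ?_).symm
      · intro k hk
        simp only [mem_range] at hk ⊢
        omega
      · intro k _ hk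
        simp only [mem_range] at hk
        rw [hH]
        simp only
        rw [if_neg (by omega), zero_mul]
    calc ∑ k : Fin n, H (k : ℕ) = ∑ k ∈ range ((i : ℕ) + 1), H k := by rw [hfin, hsub]
      _ = ∑ k ∈ range ((i : ℕ) + 1), (((i : ℕ)).choose k : ℂ) *
            (iteratedDeriv ((i : ℕ) - k) (fun y => (U y)⁻¹ p r) x *
              iteratedDeriv k (fun y => u j y r q) x) := by
          apply Finset.sum_congr rfl
          intro k hk
          rw [hH]
          simp only
          rw [if_pos (by simp only [mem_range] at hk; omega)]
          ring
end

section
/- Let A ∈ M(2m,ℂ) be written in block form A = [[A₁₁,A₁₂],[A₂₁,A₂₂]] with m×m blocks, and let D(t) = diag(t·1ₘ, 1ₘ) for t > 0. Then det(D(t) + A) = tᵐ·det(A₂₂ + 1ₘ) + O(t^{m-1}) as t → ∞. More generally, if A = A(t) = t^{1/2}·X₁ + X₀ + t^{-1/2}·X₋₁ for fixed X₁,X₀,X₋₁ ∈ M(2m,ℂ), then det(diag(e^{ct^{1/2}}·1ₘ, e^{-ct^{1/2}}·1ₘ) + A(t)) = e^{mct^{1/2}}·(det([A(t)]₂₂)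 + O(t^{(m+1)/2}e^{-ct^{1/2}})) as t → ∞, for c > 0. -/
/-!
Expanding `det (diagonal d + A)` multilinearly in the rows gives
`∑ s, (∏ i ∈ s, d i) * det Aₛ`, where `Aₛ` is `A` with the rows in `s` replaced by those of the
identity, so `‖det Aₛ‖ ≤ (card n)! ‖A‖^|sᶜ|`. Taking `s` to be the first block gives the main term
`(∏ d) · det A₂₂`. For `d = (t, 0)` (the lower identity block is moved into `A`) every other `s`
either meets the second block, and its term vanishes, or has fewer than `m` factors `t`. For
`d = (e^{c√t}, e^{-c√t})` every other `s` loses at least one net factor `e^{c√t}`; if it loses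
exactly one, it keeps at most `m + 1` rows of `A(t) = O(√t)`.
-/

open Asymptotics Filter

namespace Matrix

variable {n R : Type*} [DecidableEq n]

def oneRowsOn [Zero R] [One R] (s : Finset n) (A : Matrix n n R) : Matrix n n R :=
  of (s.piecewise (1 : Matrix n n R) A)

theorem oneRowsOn_apply [Zero R] [One R] (s : Finset n) (A : Matrix n n R) (i j : n) :
    oneRowsOn s A i j = if i ∈ s then (1 : Matrix n n R) i j else A i j := by
  simp only [oneRowsOn, of_apply, Finset.piecewise, apply_ite (fun r : n → R => r j)]

variable [Fintype n]

theorem det_diagonal_add_eq_sum [CommRing R] (d : n → R) (A : Matrix n n R) :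
    (diagonal d + A).det = ∑ s : Finset n, (∏ i ∈ s, d i) * (oneRowsOn s A).det := by
  have hrows : (diagonal d + A).det = (detRowAlternating (R := R) (n := n)).toMultilinearMap
      ((fun i => d i • (1 : Matrix n n R) i) + fun i => A i) := by
    congr 1
    ext i j
    simp [diagonal_apply, one_apply]
  rw [hrows, MultilinearMap.map_add_univ]
  refine Finset.sum_congr rfl fun s _ => ?_
  have hpiece : s.piecewise (fun i => d i • (1 : Matrix n n R) i) (fun i => A i)
      = s.piecewise (fun i => d i • oneRowsOn s A i) (oneRowsOn s A) := by
    ext i j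
    by_cases hi : i ∈ s <;> simp [hi, Finset.piecewise, oneRowsOn_apply]
  rw [hpiece]
  exact MultilinearMap.map_piecewise_smul _ _ _ _

theorem det_oneRowsOn_inl {l o : Type*} [Fintype l] [Fintype o] [DecidableEq l] [DecidableEq o]
    [CommRing R] (A : Matrix (l ⊕ o) (l ⊕ o) R) :
    (oneRowsOn (Finset.univ.disjSum ∅) A).det = A.toBlocks₂₂.det := by
  have h : oneRowsOn (Finset.univ.disjSum ∅) A = fromBlocks 1 0 A.toBlocks₂₁ A.toBlocks₂₂ := by
    ext (i | i) (j | j) <;> simp [oneRowsOn_apply, one_apply, toBlocks₂₁, toBlocks₂₂]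
  rw [h, det_fromBlocks_zero₁₂, det_one, one_mul]

theorem norm_det_le_factorial_mul_prod [NormedCommRing R] [NormOneClass R] (M : Matrix n n R)
    (B : n → ℝ) (hB : ∀ i j, ‖M i j‖ ≤ B i) :
    ‖M.det‖ ≤ (Fintype.card n).factorial * ∏ i, B i := by
  calc ‖M.det‖ ≤ ∑ σ : Equiv.Perm n, ‖Equiv.Perm.sign σ • ∏ i, M (σ i) i‖ := by
        rw [det_apply]; exact norm_sum_le _ _
    _ ≤ ∑ σ : Equiv.Perm n, ∏ i, B i := by
        refine Finset.sum_le_sum fun σ _ => ?_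
        calc ‖Equiv.Perm.sign σ • ∏ i, M (σ i) i‖ = ‖∏ i, M (σ i) i‖ := by
              rcases Int.units_eq_one_or (Equiv.Perm.sign σ) with h | h <;> simp [h]
          _ ≤ ∏ i, ‖M (σ i) i‖ := Finset.norm_prod_le _ _
          _ ≤ ∏ i, B (σ i) := Finset.prod_le_prod (fun _ _ => norm_nonneg _) fun i _ => hB _ _
          _ = ∏ i, B i := Equiv.prod_comp σ B
    _ = (Fintype.card n).factorial * ∏ i, B i := by
        simp [Finset.sum_const, Fintype.card_perm]

section SupNorm

attribute [local instance] Matrix.normedAddCommGroup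

theorem norm_det_oneRowsOn_le [NormedCommRing R] [NormOneClass R] (s : Finset n)
    (A : Matrix n n R) :
    ‖(oneRowsOn s A).det‖ ≤ (Fintype.card n).factorial * ‖A‖ ^ sᶜ.card := by
  have hrow : ∀ i j, ‖oneRowsOn s A i j‖ ≤ if i ∈ s then 1 else ‖A‖ := by
    intro i j
    by_cases hi : i ∈ s
    · simp only [oneRowsOn_apply, if_pos hi, one_apply]
      split_ifs <;> simp
    · simpa [oneRowsOn_apply, hi] using norm_entry_le_entrywise_sup_norm A
  refine (norm_det_le_factorial_mul_prod _ _ hrow).trans_eq ?_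
  rw [Finset.prod_ite, Finset.prod_const_one, one_mul, Finset.prod_const]
  simp [Finset.filter_notMem_eq_sdiff, Finset.compl_eq_univ_sdiff]

theorem isBigO_det_diagonal_add_sub {α : Type*} {l : Filter α} [NormedCommRing R]
    [NormOneClass R] (d : α → n → R) (A : α → Matrix n n R) (B g : α → ℝ) (S : Finset n)
    (hA : ∀ᶠ x in l, ‖A x‖ ≤ B x)
    (hterm : ∀ s ≠ S, (fun x => ‖∏ i ∈ s, d x i‖ * B x ^ sᶜ.card) =O[l] g) :
    (fun x => (diagonal (d x) + A x).det - (∏ i ∈ S, d x i) * (oneRowsOn S (A x)).det)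
      =O[l] g := by
  have hsplit : ∀ x, (diagonal (d x) + A x).det - (∏ i ∈ S, d x i) * (oneRowsOn S (A x)).det
      = ∑ s ∈ Finset.univ.erase S, (∏ i ∈ s, d x i) * (oneRowsOn s (A x)).det := fun x => by
    rw [det_diagonal_add_eq_sum, ← Finset.add_sum_erase _ _ (Finset.mem_univ S),
      add_sub_cancel_left]
  simp only [hsplit]
  refine IsBigO.fun_sum fun s hs => ?_
  refine IsBigO.trans ?_ (hterm s (Finset.ne_of_mem_erase hs))
  refine IsBigO.of_bound (Fintype.card n).factorial ?_
  filter_upwards [hA] with x hx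
  have hB : 0 ≤ B x := (norm_nonneg _).trans hx
  rw [Real.norm_of_nonneg (by positivity)]
  calc ‖(∏ i ∈ s, d x i) * (oneRowsOn s (A x)).det‖
      ≤ ‖∏ i ∈ s, d x i‖ * ‖(oneRowsOn s (A x)).det‖ := norm_mul_le _ _
    _ ≤ ‖∏ i ∈ s, d x i‖ * ((Fintype.card n).factorial * B x ^ sᶜ.card) := by
        gcongr
        exact (norm_det_oneRowsOn_le s (A x)).trans (by gcongr)
    _ = _ := by ring

end SupNorm

end Matrix

theorem isBigO_exp_mul_mul_pow {a b : ℝ} {p r : ℕ} (hab : a ≤ b) (hpr : a = b → p ≤ r) :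
    (fun u : ℝ => Real.exp (a * u) * u ^ p) =O[atTop] fun u => Real.exp (b * u) * u ^ r := by
  rcases hab.lt_or_eq with hab | rfl
  · have hpow : (fun u : ℝ => u ^ p) =O[atTop] fun u => Real.exp ((b - a) * u) * u ^ r := by
      refine (isLittleO_pow_exp_pos_mul_atTop p (sub_pos.2 hab)).isBigO.trans ?_
      refine IsBigO.of_bound 1 ?_
      filter_upwards [eventually_ge_atTop 1] with u hu
      rw [one_mul, Real.norm_of_nonneg (by positivity), Real.norm_of_nonneg (by positivity)]
      exact le_mul_of_one_le_right (Real.exp_pos _).le (one_le_pow₀ hu)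
    refine ((isBigO_refl (fun u => Real.exp (a * u)) atTop).mul hpow).congr_right fun u => ?_
    rw [← mul_assoc, ← Real.exp_add]
    ring_nf
  · refine (isBigO_refl _ _).mul (IsBigO.of_bound 1 ?_)
    filter_upwards [eventually_ge_atTop 1] with u hu
    rw [one_mul, Real.norm_of_nonneg (by positivity), Real.norm_of_nonneg (by positivity)]
    exact pow_le_pow_right₀ hu (hpr rfl)

theorem norm_smul_add_add_inv_smul_le {E : Type*} [NormedAddCommGroup E] [NormedSpace ℂ E]
    {u : ℝ} (hu : 1 ≤ u) (x₁ x₀ xm : E) :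
    ‖(u : ℂ) • x₁ + x₀ + (u : ℂ)⁻¹ • xm‖ ≤ u * (‖x₁‖ + ‖x₀‖ + ‖xm‖) := by
  have hinv : u⁻¹ ≤ u := (inv_le_one_of_one_le₀ hu).trans hu
  calc ‖(u : ℂ) • x₁ + x₀ + (u : ℂ)⁻¹ • xm‖ ≤ ‖(u : ℂ) • x₁‖ + ‖x₀‖ + ‖(u : ℂ)⁻¹ • xm‖ :=
        norm_add₃_le
    _ ≤ u * ‖x₁‖ + u * ‖x₀‖ + u * ‖xm‖ := by
        rw [norm_smul, norm_smul, norm_inv, Complex.norm_real, Real.norm_of_nonneg (by linarith)]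
        gcongr
        exact le_mul_of_one_le_left (norm_nonneg _) hu
    _ = u * (‖x₁‖ + ‖x₀‖ + ‖xm‖) := by ring

theorem Finset.card_toLeft_lt_or_toRight_nonempty {l o : Type*} [Fintype l]
    {s : Finset (l ⊕ o)} (hs : s ≠ Finset.univ.disjSum ∅) :
    s.toLeft.card < Fintype.card l ∨ s.toRight.Nonempty := by
  by_contra! h
  apply hs
  rw [← s.toLeft_disjSum_toRight, Finset.eq_univ_of_card _ (h.1.antisymm' (card_le_univ _)),
    h.2]

theorem Finset.card_toLeft_sub_card_toRight_le_of_ne {l o : Type*} [Fintype l] [Fintype o]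
    [DecidableEq l] [DecidableEq o] {s : Finset (l ⊕ o)} (hs : s ≠ Finset.univ.disjSum ∅) :
    (s.toLeft.card : ℤ) - s.toRight.card ≤ Fintype.card l - 1 ∧
      ((s.toLeft.card : ℤ) - s.toRight.card = Fintype.card l - 1 →
        sᶜ.card ≤ Fintype.card o + 1) := by
  have hcount : sᶜ.card + (s.toLeft.card + s.toRight.card) = Fintype.card l + Fintype.card o := by
    rw [Finset.card_toLeft_add_card_toRight, Finset.card_compl_add_card, Fintype.card_sum]
  have hleft : s.toLeft.card ≤ Fintype.card l := Finset.card_le_univ _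
  have hne : s.toLeft.card < Fintype.card l ∨ 0 < s.toRight.card :=
    (Finset.card_toLeft_lt_or_toRight_nonempty hs).imp_right Finset.card_pos.2
  omega

section

attribute [local instance] Matrix.normedAddCommGroup Matrix.normedSpace

open Matrix

variable {l o : Type*} [Fintype l] [Fintype o] [DecidableEq l] [DecidableEq o]

theorem isBigO_det_fromBlocks_smul_one_add (A₁₁ : Matrix l l ℂ) (A₁₂ : Matrix l o ℂ)
    (A₂₁ : Matrix o l ℂ) (A₂₂ : Matrix o o ℂ) :
    (fun t : ℝ => det (fromBlocks ((t : ℂ) • (1 : Matrix l l ℂ)) 0 0 1 +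
        fromBlocks A₁₁ A₁₂ A₂₁ A₂₂) - (t : ℂ) ^ Fintype.card l * det (A₂₂ + 1))
      =O[atTop] fun t : ℝ => t ^ ((Fintype.card l : ℤ) - 1) := by
  set A := fromBlocks A₁₁ A₁₂ A₂₁ (A₂₂ + 1)
  set d : ℝ → l ⊕ o → ℂ := fun t => Sum.elim (fun _ => (t : ℂ)) 0
  have hmat : ∀ t : ℝ, fromBlocks ((t : ℂ) • (1 : Matrix l l ℂ)) 0 0 1 +
      fromBlocks A₁₁ A₁₂ A₂₁ A₂₂ = diagonal (d t) + A := fun t => by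
    rw [← fromBlocks_diagonal, fromBlocks_add, fromBlocks_add, smul_one_eq_diagonal]
    simp [add_comm]
  have hprod : ∀ (s : Finset (l ⊕ o)) (t : ℝ),
      ∏ i ∈ s, d t i = (t : ℂ) ^ s.toLeft.card * 0 ^ s.toRight.card := fun s t => by
    simp [d, Finset.prod_sum_eq_prod_toLeft_mul_prod_toRight]
  have hsub : ∀ t : ℝ, (t : ℂ) ^ Fintype.card l * det (A₂₂ + 1)
      = (∏ i ∈ Finset.univ.disjSum ∅, d t i) * (oneRowsOn (Finset.univ.disjSum ∅) A).det :=
    fun t => by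
      rw [hprod, det_oneRowsOn_inl, Finset.toLeft_disjSum, Finset.toRight_disjSum,
        Finset.card_univ, Finset.card_empty, pow_zero, mul_one, toBlocks_fromBlocks₂₂]
  simp only [hmat, hsub]
  refine isBigO_det_diagonal_add_sub d (fun _ => A) (fun _ => ‖A‖) _ _
    (.of_forall fun _ => le_rfl) fun s hs => ?_
  rcases s.toRight.eq_empty_or_nonempty with hr | hr
  · have hlt := (Finset.card_toLeft_lt_or_toRight_nonempty hs).resolve_right (by simp [hr])
    refine IsBigO.of_bound (‖A‖ ^ sᶜ.card) ?_
    filter_upwards [eventually_ge_atTop 1] with t ht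
    rw [hprod, hr, show (Fintype.card l : ℤ) - 1 = ((Fintype.card l - 1 : ℕ) : ℤ) by omega,
      zpow_natCast]
    simp only [Finset.card_empty, pow_zero, mul_one, norm_pow, Complex.norm_real, norm_mul,
      norm_norm]
    rw [mul_comm]
    gcongr
    · simpa [abs_of_nonneg (by linarith : (0:ℝ) ≤ t)] using ht
    · omega
  · simpa [hprod, zero_pow (Finset.card_ne_zero.2 hr)] using isBigO_zero _ _

theorem isBigO_det_fromBlocks_exp_smul_one_add {c : ℝ} (hc : 0 < c)
    (X₁ X₀ Xm : Matrix (l ⊕ o) (l ⊕ o) ℂ) :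
    (fun u : ℝ => det (fromBlocks (Complex.exp (c * u) • (1 : Matrix l l ℂ)) 0 0
          (Complex.exp (-(c * u)) • (1 : Matrix o o ℂ)) + ((u : ℂ) • X₁ + X₀ + (u : ℂ)⁻¹ • Xm)) -
        Complex.exp (Fintype.card l * c * u) *
          det (toBlocks₂₂ ((u : ℂ) • X₁ + X₀ + (u : ℂ)⁻¹ • Xm)))
      =O[atTop] fun u : ℝ =>
        Real.exp (Fintype.card l * c * u) * u ^ (Fintype.card o + 1) * Real.exp (-(c * u)) := by
  set A : ℝ → Matrix (l ⊕ o) (l ⊕ o) ℂ := fun u => (u : ℂ) • X₁ + X₀ + (u : ℂ)⁻¹ • Xm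
  set d : ℝ → l ⊕ o → ℂ :=
    fun u => Sum.elim (fun _ => Complex.exp (c * u)) fun _ => Complex.exp (-(c * u))
  set K := ‖X₁‖ + ‖X₀‖ + ‖Xm‖
  have hprod : ∀ (s : Finset (l ⊕ o)) (u : ℝ), ∏ i ∈ s, d u i
      = Complex.exp (c * u) ^ s.toLeft.card * Complex.exp (-(c * u)) ^ s.toRight.card :=
    fun s u => by simp [d, Finset.prod_sum_eq_prod_toLeft_mul_prod_toRight]
  have hmat : ∀ u : ℝ, fromBlocks (Complex.exp (c * u) • (1 : Matrix l l ℂ)) 0 0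
      (Complex.exp (-(c * u)) • (1 : Matrix o o ℂ)) = diagonal (d u) := fun u => by
    rw [← fromBlocks_diagonal, smul_one_eq_diagonal, smul_one_eq_diagonal]
  have hsub : ∀ u : ℝ, Complex.exp (Fintype.card l * c * u) * det (toBlocks₂₂ (A u))
      = (∏ i ∈ Finset.univ.disjSum ∅, d u i) * (oneRowsOn (Finset.univ.disjSum ∅) (A u)).det :=
    fun u => by
      rw [hprod, det_oneRowsOn_inl, Finset.toLeft_disjSum, Finset.toRight_disjSum,
        Finset.card_univ, Finset.card_empty, pow_zero, mul_one, ← Complex.exp_nat_mul, mul_assoc]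
  have hA : ∀ᶠ u in atTop, ‖A u‖ ≤ u * K := by
    filter_upwards [eventually_ge_atTop 1] with u hu
    exact norm_smul_add_add_inv_smul_le hu X₁ X₀ Xm
  show (fun u : ℝ => det (_ + A u) - _ * det (toBlocks₂₂ (A u))) =O[atTop] _
  simp only [hmat, hsub]
  refine isBigO_det_diagonal_add_sub d A (fun u => u * K) _ _ hA fun s hs => ?_
  obtain ⟨hle, hcompl⟩ := Finset.card_toLeft_sub_card_toRight_le_of_ne hs
  have hexp := isBigO_exp_mul_mul_pow (a := ((s.toLeft.card : ℝ) - s.toRight.card) * c)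
    (b := ((Fintype.card l : ℝ) - 1) * c) (p := sᶜ.card) (r := Fintype.card o + 1)
    (mul_le_mul_of_nonneg_right (by exact_mod_cast hle) hc.le)
    fun h => hcompl (by exact_mod_cast mul_right_cancel₀ hc.ne' h)
  refine (hexp.const_mul_left (K ^ sᶜ.card)).congr (fun u => ?_) fun u => ?_
  · rw [hprod, norm_mul, norm_pow, norm_pow, ← Complex.ofReal_mul, ← Complex.ofReal_neg,
      Complex.norm_exp_ofReal, Complex.norm_exp_ofReal, ← Real.exp_nat_mul, ← Real.exp_nat_mul,
      ← Real.exp_add, mul_pow]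
    ring_nf
  · rw [mul_right_comm (Real.exp (_ * c * u)), ← Real.exp_add]
    ring_nf

end

theorem stmt12_general (m : ℕ) (c : ℝ) (hc : 0 < c)
    (A₁₁ A₁₂ A₂₁ A₂₂ : Matrix (Fin m) (Fin m) ℂ)
    (X₁ X₀ Xm : Matrix (Fin m ⊕ Fin m) (Fin m ⊕ Fin m) ℂ) :
    ((fun t : ℝ =>
        Matrix.det (Matrix.fromBlocks ((t : ℂ) • (1 : Matrix (Fin m) (Fin m) ℂ)) 0 0 1 +
            Matrix.fromBlocks A₁₁ A₁₂ A₂₁ A₂₂) -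
          (t : ℂ) ^ m * Matrix.det (A₂₂ + 1))
      =O[atTop] fun t : ℝ => t ^ ((m : ℤ) - 1)) ∧
    ((fun t : ℝ =>
        Matrix.det
          (Matrix.fromBlocks
              (Complex.exp (c * Real.sqrt t) • (1 : Matrix (Fin m) (Fin m) ℂ)) 0 0
              (Complex.exp (-(c * Real.sqrt t)) • (1 : Matrix (Fin m) (Fin m) ℂ)) +
            ((Real.sqrt t : ℂ) • X₁ + X₀ + ((Real.sqrt t : ℂ))⁻¹ • Xm)) -
          Complex.exp (m * c * Real.sqrt t) *
            Matrix.det (Matrix.toBlocks₂₂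
              ((Real.sqrt t : ℂ) • X₁ + X₀ + ((Real.sqrt t : ℂ))⁻¹ • Xm)))
      =O[atTop] fun t : ℝ =>
        Real.exp (m * c * Real.sqrt t) * t ^ (((m : ℝ) + 1) / 2) *
          Real.exp (-(c * Real.sqrt t))) := by
  refine ⟨by simpa using isBigO_det_fromBlocks_smul_one_add A₁₁ A₁₂ A₂₁ A₂₂, ?_⟩
  have hsqrt : ∀ᶠ t : ℝ in atTop, Real.exp (m * c * √t) * √t ^ (m + 1) * Real.exp (-(c * √t))
      = Real.exp (m * c * √t) * t ^ (((m : ℝ) + 1) / 2) * Real.exp (-(c * √t)) := by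
    filter_upwards [eventually_ge_atTop 0] with t ht
    rw [Real.rpow_div_two_eq_sqrt _ ht, ← Nat.cast_succ, Real.rpow_natCast]
  have key := (isBigO_det_fromBlocks_exp_smul_one_add hc X₁ X₀ Xm).comp_tendsto
    Real.tendsto_sqrt_atTop
  rw [Fintype.card_fin] at key
  exact key.congr' (.of_forall fun _ => rfl) hsqrt

/-- Determinant asymptotics with one exponentially dominant diagonal block:
`det(diag(t·1,1) + A) = tᵐ det(A₂₂ + 1) + O(t^{m-1})`, and for
`A(t) = t^{1/2} X₁ + X₀ + t^{-1/2} Xm`,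
`det(diag(e^{c√t}·1, e^{-c√t}·1) + A(t)) = e^{mc√t}(det [A(t)]₂₂ + O(t^{(m+1)/2} e^{-c√t}))`. -/
theorem stmt12 (m : ℕ) (hm : 1 ≤ m) (c : ℝ) (hc : 0 < c)
    (A₁₁ A₁₂ A₂₁ A₂₂ : Matrix (Fin m) (Fin m) ℂ)
    (X₁ X₀ Xm : Matrix (Fin m ⊕ Fin m) (Fin m ⊕ Fin m) ℂ) :
    ((fun t : ℝ =>
        Matrix.det (Matrix.fromBlocks ((t : ℂ) • (1 : Matrix (Fin m) (Fin m) ℂ)) 0 0 1 +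
            Matrix.fromBlocks A₁₁ A₁₂ A₂₁ A₂₂) -
          (t : ℂ) ^ m * Matrix.det (A₂₂ + 1))
      =O[atTop] fun t : ℝ => t ^ ((m : ℤ) - 1)) ∧
    ((fun t : ℝ =>
        Matrix.det
          (Matrix.fromBlocks
              (Complex.exp (c * Real.sqrt t) • (1 : Matrix (Fin m) (Fin m) ℂ)) 0 0
              (Complex.exp (-(c * Real.sqrt t)) • (1 : Matrix (Fin m) (Fin m) ℂ)) +
            ((Real.sqrt t : ℂ) • X₁ + X₀ + ((Real.sqrt t : ℂ))⁻¹ • Xm)) -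
          Complex.exp (m * c * Real.sqrt t) *
            Matrix.det (Matrix.toBlocks₂₂
              ((Real.sqrt t : ℂ) • X₁ + X₀ + ((Real.sqrt t : ℂ))⁻¹ • Xm)))
      =O[atTop] fun t : ℝ =>
        Real.exp (m * c * Real.sqrt t) * t ^ (((m : ℝ) + 1) / 2) *
          Real.exp (-(c * Real.sqrt t))) :=
  stmt12_general m c hc A₁₁ A₁₂ A₂₁ A₂₂ X₁ X₀ Xm
end
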